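/- A matching produced by the arm-proposing Gale–Shapley deferred acceptance algorithm is player-pessimal: for every stable matching M and every player p, player p weakly prefers its partner in M to its partner in the arm-proposing Gale–Shapley matching. -/

import Mathlib

/-- A matching (an injective assignment of players to arms, `|P| ≤ |A|`) is stable if
there is no blocking pair: no player `p` and arm `a` such that `p` strictly prefers `a`
to its current match and `a` strictly prefers `p` to its current match (or is unmatched).
Strict preferences are encoded by injective utility functions. -/
def IsStableMatching {P A : Type*} (pu : P → A → ℝ) (au : A → P → ℝ)
    (m : P → A) : Prop :=
  Function.Injective m ∧
    ¬ ∃ (p : P) (a : A), pu p (m p) < pu p a ∧ ∀ p', m p' = a → au a p' < au a p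

theorem IsStableMatching.exists_partner_ge_of_lt {P A : Type*} {pu : P → A → ℝ}
    {au : A → P → ℝ} {m : P → A} (hm : IsStableMatching pu au m) {p : P} {a : A}
    (h : pu p (m p) < pu p a) : ∃ p', m p' = a ∧ au a p ≤ au a p' := by
  by_contra! hblock
  exact hm.2 ⟨p, a, h, hblock⟩

theorem arm_proposing_GS_is_player_pessimal_general
    {P A : Type*}
    (pu : P → A → ℝ) (au : A → P → ℝ)
    (hau : ∀ a, Function.Injective (au a))
    (gs : P → A)
    (hgs_armopt : ∀ M, IsStableMatching pu au M →
      ∀ (a : A) (p p' : P), gs p = a → M p' = a → au a p' ≤ au a p) :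
    ∀ M, IsStableMatching pu au M → ∀ p : P, pu p (gs p) ≤ pu p (M p) := by
  intro M hM p
  by_contra! hlt
  -- `(p, gs p)` does not block `M`, so `gs p` is matched in `M` to some `p'` it likes at least
  -- as much as `p`; arm-optimality of `gs` forces `p' = p`.
  obtain ⟨p', hp', hle⟩ := hM.exists_partner_ge_of_lt hlt
  obtain rfl : p' = p := hau _ (le_antisymm (hgs_armopt M hM _ p p' rfl hp') hle)
  exact hlt.ne (congrArg (pu p') hp')

/-- the matching produced by the arm-proposing Gale–Shapley deferred
acceptance algorithm — characterized as the arm-optimal stable matching: every arm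
weakly prefers its partner in `gs` (or being unmatched in `gs`) to its partner in any
stable matching — is player-pessimal: every player weakly prefers its partner in any
stable matching `M` to its partner in `gs`. -/
theorem arm_proposing_GS_is_player_pessimal
    {P A : Type*} [Fintype P] [Fintype A]
    (hcard : Fintype.card P ≤ Fintype.card A)
    (pu : P → A → ℝ) (au : A → P → ℝ)
    (hpu : ∀ p, Function.Injective (pu p))
    (hau : ∀ a, Function.Injective (au a))
    (gs : P → A)
    (hgs_stable : IsStableMatching pu au gs)
    (hgs_armopt : ∀ M, IsStableMatching pu au M →
      ∀ (a : A) (p p' : P), gs p = a → M p' = a → au a p' ≤ au a p) :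
    ∀ M, IsStableMatching pu au M → ∀ p : P, pu p (gs p) ≤ pu p (M p) :=
  arm_proposing_GS_is_player_pessimal_general pu au hau gs hgs_armopt
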